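/- arXiv:2206.14035 — 2 statements merged into one kernel-verified Lean document; each statement's English description precedes it below -/
import Mathlib

section
/- For every natural number j one has r(j) ≤ p^j, and for every j ≥ 1 one has p^{j−1} < r(j). -/
/-- `q(k) = ∑_{m<k} p^{m(n+1)}`. -/
def qq (p n k : ℕ) : ℕ := ∑ m ∈ Finset.range k, p ^ (m * (n + 1))

/-- `r(j) = p^{i+1}(p^n-1) q(k) + k + p^i` where `j = i + k(n+1)`, `0 ≤ i ≤ n`. -/
def rr (p n j : ℕ) : ℕ :=
  p ^ (j % (n + 1) + 1) * (p ^ n - 1) * qq p n (j / (n + 1)) + j / (n + 1) + p ^ (j % (n + 1))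

/-- `r'(j) = p^{j+1} - r(j)`. -/
def rr' (p n j : ℕ) : ℕ := p ^ (j + 1) - rr p n j

/-- `W(j) = |w_{n+j}|`: `W(j) = 2p^{n+j}+1` for `0 ≤ j ≤ n`, and
`W(j+n+1) = 2p^j(p-1) + W(j) + 2(p^n-1)(p^{n+j+1}+1)`. -/
def WW (p n : ℕ) (j : ℕ) : ℕ :=
  if h : j < n + 1 then 2 * p ^ (n + j) + 1
  else 2 * p ^ (j - (n + 1)) * (p - 1) + WW p n (j - (n + 1))
       + 2 * (p ^ n - 1) * (p ^ ((j - (n + 1)) + n + 1) + 1)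
termination_by j
decreasing_by omega

/-!
Since `q(k) (p^{n+1} - 1) = p^{k(n+1)} - 1` is a geometric sum, `p^j - r(j) = p^i (p - 1) q(k) - k`
with `j = i + k(n+1)`. The upper bound follows from `k ≤ q(k)`, the lower bound from
`p q(k) < p^{k(n+1)}`, which holds because `p ≤ p^{n+1} - 1` once `n ≥ 1`.
-/

section

variable {p n : ℕ}

theorem qq_mul_sub_one_add_one (hp : 0 < p) (k : ℕ) :
    qq p n k * (p ^ (n + 1) - 1) + 1 = p ^ (k * (n + 1)) := by
  have h : p ^ (n + 1) - 1 + 1 = p ^ (n + 1) := Nat.sub_add_cancel (Nat.one_le_pow _ _ hp)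
  simpa [qq, pow_mul', h] using geom_sum_mul_add (p ^ (n + 1) - 1) k

theorem le_qq (hp : 0 < p) (k : ℕ) : k ≤ qq p n k := by
  simpa [qq] using Finset.card_nsmul_le_sum (Finset.range k) (fun m => p ^ (m * (n + 1))) 1
    fun _ _ => Nat.one_le_pow _ _ hp

theorem mul_qq_lt (hp : 2 ≤ p) (hn : 1 ≤ n) (k : ℕ) : p * qq p n k < p ^ (k * (n + 1)) := by
  have hpn : p ≤ p ^ (n + 1) - 1 := by
    have : p * p ≤ p ^ (n + 1) := by
      rw [← sq]; exact Nat.pow_le_pow_right (by omega) (by omega)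
    have : p + 1 < p * p := by nlinarith
    omega
  calc p * qq p n k ≤ qq p n k * (p ^ (n + 1) - 1) := by rw [mul_comm]; gcongr
    _ < p ^ (k * (n + 1)) := by rw [← qq_mul_sub_one_add_one (by omega : 0 < p)]; omega

theorem rr_add_pow_mul_qq (hp : 0 < p) (j : ℕ) :
    rr p n j + p ^ (j % (n + 1)) * (p - 1) * qq p n (j / (n + 1)) = p ^ j + j / (n + 1) := by
  have hj : p ^ j = p ^ (j % (n + 1)) * p ^ (j / (n + 1) * (n + 1)) := by
    rw [← pow_add, Nat.mod_add_div' j (n + 1)]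
  have h1 : 1 ≤ p ^ n := Nat.one_le_pow _ _ hp
  have h2 : 1 ≤ p ^ (n + 1) := Nat.one_le_pow _ _ hp
  rw [rr, hj, ← qq_mul_sub_one_add_one hp (j / (n + 1))]
  zify [h1, h2, hp]
  ring

theorem rr_le_pow (hp : 2 ≤ p) (j : ℕ) : rr p n j ≤ p ^ j := by
  have hk : j / (n + 1) ≤ p ^ (j % (n + 1)) * (p - 1) * qq p n (j / (n + 1)) :=
    calc j / (n + 1) ≤ qq p n (j / (n + 1)) := le_qq (by omega : 0 < p) _
      _ ≤ p ^ (j % (n + 1)) * (p - 1) * qq p n (j / (n + 1)) :=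
        Nat.le_mul_of_pos_left _ (Nat.mul_pos (by positivity) (by omega))
  have := rr_add_pow_mul_qq (n := n) (by omega : 0 < p) j
  omega

theorem pow_pred_lt_rr (hp : 2 ≤ p) (hn : 1 ≤ n) {j : ℕ} (hj : 1 ≤ j) :
    p ^ (j - 1) < rr p n j := by
  have hsum := rr_add_pow_mul_qq (n := n) (by omega : 0 < p) j
  set i := j % (n + 1)
  set k := j / (n + 1)
  have hpj : p ^ j = p * p ^ (j - 1) := by rw [← pow_succ']; congr 1; omega
  have hq : p ^ i * qq p n k < p ^ (j - 1) := by
    refine Nat.lt_of_mul_lt_mul_left (a := p) ?_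
    calc p * (p ^ i * qq p n k) = p ^ i * (p * qq p n k) := by ring
      _ < p ^ i * p ^ (k * (n + 1)) := by gcongr; exact mul_qq_lt hp hn k
      _ = p * p ^ (j - 1) := by rw [← pow_add, Nat.mod_add_div' j (n + 1), hpj]
  have hdefect : p ^ i * (p - 1) * qq p n k < (p - 1) * p ^ (j - 1) := by
    rw [mul_right_comm, mul_comm (p - 1)]
    exact Nat.mul_lt_mul_of_pos_right hq (by omega)
  have hsplit : p ^ j = p ^ (j - 1) + (p - 1) * p ^ (j - 1) := by
    rw [hpj]
    zify [(by omega : 1 ≤ p)]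
    ring
  linarith

end

/-- `r(j) <= p^j` for all `j`, and `p^{j-1} < r(j)` for `j >= 1`. -/
theorem r_bounds (p n : ℕ) (hp : p.Prime) (hn : 1 ≤ n) :
    (∀ j, rr p n j ≤ p ^ j) ∧ (∀ j, 1 ≤ j → p ^ (j - 1) < rr p n j) :=
  ⟨rr_le_pow hp.two_le, fun _ hj => pow_pred_lt_rr hp.two_le hn hj⟩
end

section
/- For every natural number j one has r'(j) ≥ p^{j+1} − p^j, and for every j ≥ 1 one has r'(j) < p^{j+1} − p^{j−1}. -/
/-! Write `j = i + k(n+1)`. Since `q(k+1) = q(k) + p^{k(n+1)}`, the sequence `r` satisfies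
`r(j) = p^j` for `j ≤ n` and `r(j + n + 1) = r(j) + p^{j+1}(p^n - 1) + 1`. By induction along this
recurrence, `p^{j-1} < r(j) ≤ p^j`, which is the claim after subtracting from `p^{j+1}`. -/

theorem qq_succ (p n k : ℕ) : qq p n (k + 1) = qq p n k + p ^ (k * (n + 1)) :=
  Finset.sum_range_succ _ _

theorem rr_of_lt {p n j : ℕ} (hj : j < n + 1) : rr p n j = p ^ j := by
  simp [rr, qq, Nat.mod_eq_of_lt hj, Nat.div_eq_of_lt hj]

theorem rr_add (p n j : ℕ) :
    rr p n (j + (n + 1)) = rr p n j + p ^ (j + 1) * (p ^ n - 1) + 1 := by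
  have hpow : p ^ (j % (n + 1) + 1) * p ^ (j / (n + 1) * (n + 1)) = p ^ (j + 1) := by
    rw [← pow_add]
    congr 1
    have := Nat.mod_add_div' j (n + 1)
    omega
  simp only [rr, Nat.add_mod_right, Nat.add_div_right j n.succ_pos, qq_succ]
  rw [← hpow]
  ring

section Bounds

variable {p n : ℕ}

theorem pow_lt_mul_rr (hp : 2 ≤ p) (hn : 1 ≤ n) (j : ℕ) : p ^ j < p * rr p n j := by
  induction j using Nat.strong_induction_on with
  | _ j ih =>
  rcases lt_or_ge j (n + 1) with hj | hj
  · rw [rr_of_lt hj]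
    exact lt_mul_left (pow_pos (by omega) j) (by omega)
  obtain ⟨j, rfl⟩ := Nat.exists_eq_add_of_le' hj
  have hprev := ih j (by omega)
  -- `p^n - 1 ≥ 1` is what lets the new term `p^{j+2}(p^n - 1)` absorb `p^{j+n+1}`.
  obtain ⟨c, hc⟩ : ∃ c, p ^ n = c + 2 :=
    ⟨p ^ n - 2, by have := Nat.le_self_pow (by omega : n ≠ 0) p; omega⟩
  have hsplit : p ^ (j + (n + 1)) = p * p ^ j * (c + 2) := by
    rw [← hc]
    ring
  rw [rr_add, hsplit, hc, show c + 2 - 1 = c + 1 by omega, pow_succ]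
  have hgrow : 2 * (p ^ j * p * (c + 1)) ≤ p * (p ^ j * p * (c + 1)) := Nat.mul_le_mul_right _ hp
  nlinarith [Nat.zero_le (p ^ j * p * c)]

end Bounds

/-- `p^{j+1} - p^j <= r'(j)` for all `j`, and `r'(j) < p^{j+1} - p^{j-1}` for `j >= 1`. -/
theorem r'_bounds (p n : ℕ) (hp : p.Prime) (hn : 1 ≤ n) :
    (∀ j, p ^ (j + 1) - p ^ j ≤ rr' p n j) ∧
    (∀ j, 1 ≤ j → rr' p n j < p ^ (j + 1) - p ^ (j - 1)) := by
  have hp2 := hp.two_le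
  refine ⟨fun j => Nat.sub_le_sub_left (rr_le_pow hp2 j) _, fun j hj => ?_⟩
  have hlt : p ^ (j - 1) < p ^ (j + 1) := Nat.pow_lt_pow_right hp2 (by omega)
  exact Nat.sub_lt_sub_left hlt (pow_pred_lt_rr hp2 hn hj)
end
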